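/- arXiv:2111.13846 — 2 statements merged into one kernel-verified Lean document; each statement's English description precedes it below -/
import Mathlib

section
/- Let α > 1 be real, let s > 0, let p ∈ [0,1], and let b ≥ 1 be an integer. Then 2 · ∫₀^∞ [1 − (1 − p·s/(u^α+s))^b] du = 2 · s^(1/α) · Γ(1+1/α) · Γ(1−1/α) · 𝔇_b(p,1/α). -/
open Real MeasureTheory
open Set



lemma beta_eqon (P Q : ℝ) :
    EqOn (fun x : ℝ => ((x : ℂ) ^ ((P : ℂ) - 1) * (1 - (x : ℂ)) ^ ((Q : ℂ) - 1)))
      (fun x : ℝ => ((x ^ (P - 1) * (1 - x) ^ (Q - 1) : ℝ) : ℂ)) (Ioc 0 1) := by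
  intro x hx
  have hx0 : (0:ℝ) ≤ x := hx.1.le
  have hx1 : (0:ℝ) ≤ 1 - x := by linarith [hx.2]
  simp only
  rw [Complex.ofReal_mul, Complex.ofReal_cpow hx0, Complex.ofReal_cpow hx1]
  push_cast
  ring_nf

lemma beta_integrable {P Q : ℝ} (hP : 0 < P) (hQ : 0 < Q) :
    IntegrableOn (fun x : ℝ => x ^ (P - 1) * (1 - x) ^ (Q - 1)) (Ioo 0 1) := by
  have h := Complex.betaIntegral_convergent (u := (P:ℂ)) (v := (Q:ℂ)) (by simpa using hP)
    (by simpa using hQ)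
  rw [intervalIntegrable_iff_integrableOn_Ioc_of_le zero_le_one] at h
  have h2 : IntegrableOn (fun x : ℝ => ((x ^ (P - 1) * (1 - x) ^ (Q - 1) : ℝ) : ℂ)) (Ioc 0 1) :=
    h.congr_fun (beta_eqon P Q) measurableSet_Ioc
  have h3 := h2.re
  have h4 : IntegrableOn (fun x : ℝ => x ^ (P - 1) * (1 - x) ^ (Q - 1)) (Ioc 0 1) := by
    simp at h3; exact h3
  exact h4.mono_set Ioo_subset_Ioc_self

lemma beta_value {P Q : ℝ} (hP : 0 < P) (hQ : 0 < Q) :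
    ∫ x in Ioo (0:ℝ) 1, x ^ (P - 1) * (1 - x) ^ (Q - 1)
      = Real.Gamma P * Real.Gamma Q / Real.Gamma (P + Q) := by
  have h := Complex.Gamma_mul_Gamma_eq_betaIntegral (s := (P:ℂ)) (t := (Q:ℂ))
    (by simpa using hP) (by simpa using hQ)
  have hbeta : Complex.betaIntegral (P:ℂ) (Q:ℂ)
      = ((∫ x in Ioo (0:ℝ) 1, x ^ (P - 1) * (1 - x) ^ (Q - 1) : ℝ) : ℂ) := by
    rw [Complex.betaIntegral, intervalIntegral.integral_of_le zero_le_one,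
      setIntegral_congr_fun measurableSet_Ioc (beta_eqon P Q),
      integral_Ioc_eq_integral_Ioo]
    exact integral_ofReal
  rw [hbeta, Complex.Gamma_ofReal, Complex.Gamma_ofReal] at h
  have hPQ : ((P:ℂ) + (Q:ℂ)) = ((P + Q : ℝ) : ℂ) := by push_cast; ring
  rw [hPQ, Complex.Gamma_ofReal, ← Complex.ofReal_mul, ← Complex.ofReal_mul] at h
  have h' : Real.Gamma P * Real.Gamma Q
      = Real.Gamma (P + Q) * ∫ x in Ioo (0:ℝ) 1, x ^ (P - 1) * (1 - x) ^ (Q - 1) := by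
    exact_mod_cast h
  have hne : Real.Gamma (P + Q) ≠ 0 := (Real.Gamma_pos_of_pos (by positivity)).ne'
  field_simp [hne] at h' ⊢
  linarith [h']

section
variable {α s : ℝ}

lemma phi_deriv (hα : 1 < α) (hs : 0 < s) :
    ∀ y ∈ Ioo (0:ℝ) 1, HasDerivWithinAt (fun y : ℝ => s ^ (1/α) * (y⁻¹ - 1) ^ (1/α))
      (s ^ (1/α) * (-(y^2)⁻¹ * (1/α) * (y⁻¹ - 1) ^ (1/α - 1))) (Ioo 0 1) y := by
  intro y hy
  have hy0 : 0 < y := hy.1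
  have hfx : 0 < y⁻¹ - 1 := by
    have : 1 < y⁻¹ := (one_lt_inv₀ hy0).mpr hy.2
    linarith
  have h1 : HasDerivAt (fun y : ℝ => y⁻¹ - 1) (-(y^2)⁻¹) y :=
    (hasDerivAt_inv hy0.ne').sub_const 1
  have h2 := h1.rpow_const (p := 1/α) (Or.inl hfx.ne')
  exact ((h2.const_mul (s ^ (1/α)))).hasDerivWithinAt

lemma phi_inj (hα : 1 < α) (hs : 0 < s) :
    InjOn (fun y : ℝ => s ^ (1/α) * (y⁻¹ - 1) ^ (1/α)) (Ioo 0 1) := by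
  intro y1 h1 y2 h2 heq
  have hs' : s ^ (1/α) ≠ 0 := (rpow_pos_of_pos hs _).ne'
  have hb1 : 0 < y1⁻¹ - 1 := by
    have : 1 < y1⁻¹ := (one_lt_inv₀ h1.1).mpr h1.2; linarith
  have hb2 : 0 < y2⁻¹ - 1 := by
    have : 1 < y2⁻¹ := (one_lt_inv₀ h2.1).mpr h2.2; linarith
  have heq' : (y1⁻¹ - 1) ^ (1/α) = (y2⁻¹ - 1) ^ (1/α) := mul_left_cancel₀ hs' heq
  have hinj := Real.rpow_left_injOn (x := 1/α) (by positivity)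
  have := hinj (mem_setOf.mpr hb1.le) (mem_setOf.mpr hb2.le) heq'
  have hy : y1⁻¹ = y2⁻¹ := by linarith [this]
  exact inv_injective hy

lemma phi_image (hα : 1 < α) (hs : 0 < s) :
    (fun y : ℝ => s ^ (1/α) * (y⁻¹ - 1) ^ (1/α)) '' Ioo 0 1 = Ioi 0 := by
  have hα0 : (0:ℝ) < α := by linarith
  ext u
  constructor
  · rintro ⟨y, hy, rfl⟩
    have hb : 0 < y⁻¹ - 1 := by
      have : 1 < y⁻¹ := (one_lt_inv₀ hy.1).mpr hy.2; linarith
    exact mul_pos (rpow_pos_of_pos hs _) (rpow_pos_of_pos hb _)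
  · intro hu
    have hu0 : (0:ℝ) < u := hu
    have hua : 0 < u ^ α := rpow_pos_of_pos hu0 _
    have hden : 0 < u ^ α + s := by linarith
    refine ⟨s / (u ^ α + s), ⟨by positivity, ?_⟩, ?_⟩
    · rw [div_lt_one hden]; linarith
    · have h1 : (s / (u ^ α + s))⁻¹ - 1 = u ^ α / s := by
        field_simp
        ring
      simp only [h1]
      rw [div_rpow hua.le hs.le, ← Real.rpow_mul hu0.le]
      rw [mul_one_div, div_self hα0.ne', Real.rpow_one]
      field_simp

end

section
variable {α s : ℝ}

lemma phi_rpow (hα : 1 < α) (hs : 0 < s) {y : ℝ} (hy : y ∈ Ioo (0:ℝ) 1) :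
    (s ^ (1/α) * (y⁻¹ - 1) ^ (1/α)) ^ α = s * (y⁻¹ - 1) := by
  have hα0 : (0:ℝ) < α := by linarith
  have hb : 0 < y⁻¹ - 1 := by
    have : 1 < y⁻¹ := (one_lt_inv₀ hy.1).mpr hy.2; linarith
  rw [mul_rpow (rpow_nonneg hs.le _) (rpow_nonneg hb.le _),
    ← Real.rpow_mul hs.le, ← Real.rpow_mul hb.le]
  rw [show 1/α * α = 1 by field_simp, Real.rpow_one, Real.rpow_one]

lemma point_k (hα : 1 < α) (hs : 0 < s) (p : ℝ) (k : ℕ) {y : ℝ} (hy : y ∈ Ioo (0:ℝ) 1) :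
    |s ^ (1/α) * (-(y^2)⁻¹ * (1/α) * (y⁻¹ - 1) ^ (1/α - 1))| *
      (p * s / ((s ^ (1/α) * (y⁻¹ - 1) ^ (1/α)) ^ α + s)) ^ k
    = p ^ k * ((1/α) * s ^ (1/α)) * (y ^ ((k:ℝ) - 1/α - 1) * (1 - y) ^ (1/α - 1)) := by
  have hα0 : (0:ℝ) < α := by linarith
  have hy0 : 0 < y := hy.1
  have hy1 : y < 1 := hy.2
  have hb : 0 < y⁻¹ - 1 := by
    have : 1 < y⁻¹ := (one_lt_inv₀ hy0).mpr hy1; linarith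
  rw [phi_rpow hα hs hy]
  have hfrac : p * s / (s * (y⁻¹ - 1) + s) = p * y := by
    rw [show s * (y⁻¹ - 1) + s = s * y⁻¹ by ring, div_eq_iff (by positivity)]
    field_simp
  rw [hfrac]
  have hA := rpow_pos_of_pos hs (1/α)
  have hB := rpow_pos_of_pos hb (1/α - 1)
  have hC : (0:ℝ) < (y^2)⁻¹ := by positivity
  have hD : (0:ℝ) < 1/α := by positivity
  have habs : |s ^ (1/α) * (-(y^2)⁻¹ * (1/α) * (y⁻¹ - 1) ^ (1/α - 1))|
      = (1/α) * s ^ (1/α) * ((y⁻¹ - 1) ^ (1/α - 1) * (y^2)⁻¹) := by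
    rw [abs_of_nonpos (by nlinarith [mul_pos (mul_pos (mul_pos hA hC) hD) hB])]
    ring
  rw [habs]
  have hpow : (y⁻¹ - 1) ^ (1/α - 1) = (1 - y) ^ (1/α - 1) * y ^ (1 - 1/α) := by
    rw [show y⁻¹ - 1 = (1 - y)/y by field_simp,
      Real.div_rpow (by linarith) hy0.le, div_eq_mul_inv, ← Real.rpow_neg hy0.le]
    ring_nf
  have hyk : y ^ ((k:ℝ) - 1/α - 1) = y ^ (1 - 1/α) * (y^2)⁻¹ * y ^ k := by
    rw [← Real.rpow_natCast y k, ← Real.rpow_natCast y 2, ← Real.rpow_neg hy0.le,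
      ← Real.rpow_add hy0, ← Real.rpow_add hy0]
    congr 1
    push_cast
    ring
  rw [hpow, mul_pow, hyk]
  ring

end

lemma prod_gamma {a : ℝ} (ha1 : a < 1) (m : ℕ) :
    ∏ j ∈ Finset.Icc 1 m, (a - (j:ℝ)) / (j:ℝ)
      = (-1:ℝ) ^ m * Real.Gamma ((m:ℝ) + 1 - a) / (Real.Gamma (1 - a) * m.factorial) := by
  have hG : Real.Gamma (1 - a) ≠ 0 := (Real.Gamma_pos_of_pos (by linarith)).ne'
  induction m with
  | zero => simp [hG]
  | succ n ih =>
      rw [Finset.prod_Icc_succ_top (Nat.one_le_iff_ne_zero.mpr (Nat.succ_ne_zero n)), ih]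
      have hne : ((n:ℝ) + 1 - a) ≠ 0 := by push_cast; nlinarith [Nat.cast_nonneg (α := ℝ) n]
      have hΓ : Real.Gamma ((n:ℝ) + 1 + 1 - a) = ((n:ℝ) + 1 - a) * Real.Gamma ((n:ℝ) + 1 - a) := by
        have := Real.Gamma_add_one hne
        rw [← this]; ring_nf
      have hfac : ((n + 1).factorial : ℝ) = ((n:ℝ) + 1) * n.factorial := by
        push_cast [Nat.factorial_succ]; ring
      push_cast
      rw [hΓ, hfac]
      have hfne : (n.factorial : ℝ) ≠ 0 := Nat.cast_ne_zero.mpr (Nat.factorial_ne_zero n)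
      field_simp
      ring

lemma expand_pow (x : ℝ) (b : ℕ) :
    1 - (1 - x) ^ b = ∑ k ∈ Finset.Icc 1 b, (b.choose k : ℝ) * (-1:ℝ) ^ (k+1) * x ^ k := by
  have h : (1 - x) ^ b = ∑ m ∈ Finset.range (b+1), (-x) ^ m * 1 ^ (b - m) * (b.choose m : ℝ) := by
    rw [← add_pow]; ring_nf
  have hrange : Finset.range (b+1) = Finset.Icc 0 b := by
    rw [Finset.range_eq_Ico, Finset.Ico_add_one_right_eq_Icc]
  have hsplit : ∑ m ∈ Finset.Icc 0 b, (-x) ^ m * 1 ^ (b - m) * (b.choose m : ℝ)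
      = 1 + ∑ m ∈ Finset.Icc 1 b, (-x) ^ m * 1 ^ (b - m) * (b.choose m : ℝ) := by
    rw [← Finset.add_sum_erase _ _ (Finset.mem_Icc.mpr ⟨le_refl 0, Nat.zero_le b⟩)]
    rw [Finset.Icc_erase_left, ← Finset.Icc_add_one_left_eq_Ioc]
    simp
  rw [h, hrange, hsplit]
  rw [show (1 : ℝ) - (1 + ∑ m ∈ Finset.Icc 1 b, (-x) ^ m * 1 ^ (b - m) * (b.choose m : ℝ))
      = ∑ m ∈ Finset.Icc 1 b, -((-x) ^ m * 1 ^ (b - m) * (b.choose m : ℝ)) by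
    rw [Finset.sum_neg_distrib]; ring]
  refine Finset.sum_congr rfl fun k hk => ?_
  rw [neg_mul_eq_neg_mul, one_pow, neg_pow, pow_succ]
  ring



/-- `𝔇_b(p,q) := ∑_{k=1}^{b} C(b,k) p^k ∏_{j=1}^{k−1} (q−j)/j` (empty product = 1). -/
noncomputable def Dcal (b : ℕ) (p q : ℝ) : ℝ :=
  ∑ k ∈ Finset.Icc 1 b, (b.choose k : ℝ) * p ^ k *
    ∏ j ∈ Finset.Icc 1 (k - 1), (q - (j : ℝ)) / (j : ℝ)

theorem stmt1 (α s p : ℝ) (b : ℕ) (hα : 1 < α) (hs : 0 < s)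
    (hp0 : 0 ≤ p) (hp1 : p ≤ 1) (hb : 1 ≤ b) :
    2 * ∫ u in Set.Ioi (0 : ℝ), (1 - (1 - p * s / (u ^ α + s)) ^ b) =
      2 * s ^ (1 / α) * Real.Gamma (1 + 1 / α) * Real.Gamma (1 - 1 / α) *
        Dcal b p (1 / α) := by
  have hα0 : (0:ℝ) < α := by linarith
  have ha0 : (0:ℝ) < 1/α := by positivity
  have ha1 : 1/α < 1 := by rw [div_lt_one hα0]; linarith
  set F : ℕ → ℝ → ℝ := fun k u => (b.choose k : ℝ) * (-1:ℝ) ^ (k+1) * (p * s / (u ^ α + s)) ^ k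
    with hF
  -- pointwise expansion
  have hexp : ∀ u ∈ Ioi (0:ℝ), 1 - (1 - p * s / (u ^ α + s)) ^ b
      = ∑ k ∈ Finset.Icc 1 b, F k u := fun u _ => expand_pow _ b
  -- integrability of each term
  have hderiv := phi_deriv (s := s) (α := α) hα hs
  have hinj := phi_inj hα hs
  have himg := phi_image hα hs
  have hkey : ∀ k : ℕ, 1 ≤ k → ∀ y ∈ Ioo (0:ℝ) 1,
      ((b.choose k : ℝ) * (-1:ℝ)^(k+1) * p ^ k * (1/α * s^(1/α)))
          * (y ^ (((k:ℝ) - 1/α) - 1) * (1 - y) ^ ((1/α) - 1))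
        = |s ^ (1/α) * (-(y^2)⁻¹ * (1/α) * (y⁻¹ - 1) ^ (1/α - 1))|
          • F k (s ^ (1/α) * (y⁻¹ - 1) ^ (1/α)) := by
    intro k hk y hy
    have hp := point_k hα hs p k hy
    simp only [smul_eq_mul, hF]
    set A := |s ^ (1/α) * (-(y^2)⁻¹ * (1/α) * (y⁻¹ - 1) ^ (1/α - 1))| with hA
    linear_combination (-(b.choose k : ℝ) * (-1:ℝ)^(k+1)) * hp
  have hint : ∀ k ∈ Finset.Icc 1 b, IntegrableOn (F k) (Ioi (0:ℝ)) := by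
    intro k hk
    have hk1 : 1 ≤ k := (Finset.mem_Icc.mp hk).1
    have hkP : (0:ℝ) < (k:ℝ) - 1/α := by
      have : (1:ℝ) ≤ (k:ℝ) := by exact_mod_cast hk1
      linarith
    rw [← himg, integrableOn_image_iff_integrableOn_abs_deriv_smul measurableSet_Ioo
      hderiv hinj]
    exact MeasureTheory.IntegrableOn.congr_fun
      ((beta_integrable hkP ha0).const_mul _) (hkey k hk1) measurableSet_Ioo
  -- value of each term
  have hval : ∀ k ∈ Finset.Icc 1 b, ∫ u in Ioi (0:ℝ), F k u
      = (b.choose k : ℝ) * (-1:ℝ)^(k+1) * p ^ k * (1/α * s^(1/α)) *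
        (Real.Gamma ((k:ℝ) - 1/α) * Real.Gamma (1/α) / Real.Gamma (((k:ℝ) - 1/α) + 1/α)) := by
    intro k hk
    have hk1 : 1 ≤ k := (Finset.mem_Icc.mp hk).1
    have hkP : (0:ℝ) < (k:ℝ) - 1/α := by
      have : (1:ℝ) ≤ (k:ℝ) := by exact_mod_cast hk1
      linarith
    rw [← himg, integral_image_eq_integral_abs_deriv_smul measurableSet_Ioo hderiv hinj,
      ← setIntegral_congr_fun measurableSet_Ioo (hkey k hk1),
      integral_const_mul, beta_value hkP ha0]
  -- termwise identification with Dcal summand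
  have hterm : ∀ k ∈ Finset.Icc 1 b,
      (b.choose k : ℝ) * (-1:ℝ)^(k+1) * p ^ k * (1/α * s^(1/α)) *
        (Real.Gamma ((k:ℝ) - 1/α) * Real.Gamma (1/α) / Real.Gamma (((k:ℝ) - 1/α) + 1/α))
      = s ^ (1/α) * Real.Gamma (1 + 1/α) * Real.Gamma (1 - 1/α) *
        ((b.choose k : ℝ) * p ^ k * ∏ j ∈ Finset.Icc 1 (k - 1), ((1/α) - (j:ℝ)) / (j:ℝ)) := by
    intro k hk
    have hk1 : 1 ≤ k := (Finset.mem_Icc.mp hk).1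
    have hG1 : Real.Gamma (1 - 1/α) ≠ 0 := (Real.Gamma_pos_of_pos (by linarith)).ne'
    have hGa : Real.Gamma (1/α) ≠ 0 := (Real.Gamma_pos_of_pos ha0).ne'
    have hfac : (((k-1).factorial : ℕ) : ℝ) ≠ 0 := Nat.cast_ne_zero.mpr (Nat.factorial_ne_zero _)
    have hcast : ((k - 1 : ℕ) : ℝ) = (k:ℝ) - 1 := by
      rw [Nat.cast_sub hk1]; simp
    have hGk : Real.Gamma (((k:ℝ) - 1/α) + 1/α) = (((k-1).factorial : ℕ) : ℝ) := by
      rw [show ((k:ℝ) - 1/α) + 1/α = ((k-1:ℕ):ℝ) + 1 by rw [hcast]; ring]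
      exact Real.Gamma_nat_eq_factorial _
    rw [hGk, prod_gamma ha1 (k-1), hcast]
    rw [show (k:ℝ) - 1 + 1 - 1/α = (k:ℝ) - 1/α by ring]
    rw [show (1:ℝ) + 1/α = 1/α + 1 by ring, Real.Gamma_add_one ha0.ne']
    rw [show k + 1 = (k-1)+2 by omega, pow_add]
    set Gk := Real.Gamma ((k:ℝ) - 1/α) with hGk2
    set Ga := Real.Gamma (1/α) with hGa2
    set G1 := Real.Gamma (1 - 1/α) with hG12
    set fc := (((k-1).factorial : ℕ) : ℝ) with hfc2
    set sa := s ^ (1/α) with hsa2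
    field_simp [hG1, hfac]
  -- assemble
  have hsum : ∫ u in Ioi (0:ℝ), (1 - (1 - p * s / (u ^ α + s)) ^ b)
      = ∑ k ∈ Finset.Icc 1 b, ∫ u in Ioi (0:ℝ), F k u := by
    rw [setIntegral_congr_fun measurableSet_Ioi hexp]
    exact integral_finset_sum _ hint
  rw [hsum]
  rw [Finset.sum_congr rfl (fun k hk => (hval k hk).trans (hterm k hk))]
  rw [Dcal, ← Finset.mul_sum]
  ring
end

section
/- Let α > 2 be real, let s > 0, let p ∈ [0,1], and let b ≥ 1 be an integer. Then the Lebesgue integral over the plane ∫_{ℝ²} [1 − (1 − p·s/(‖z‖^α+s))^b] dz = π · s^(2/α) · Γ(1+2/α) · Γ(1−2/α) · 𝔇_b(p,2/α), where ‖z‖ denotes the Euclidean norm of z ∈ ℝ². -/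
open Real MeasureTheory Set

lemma real_beta {a c : ℝ} (ha : 0 < a) (hc : 0 < c) :
    ∫ x in (0:ℝ)..1, x ^ (a - 1) * (1 - x) ^ (c - 1) =
      Real.Gamma a * Real.Gamma c / Real.Gamma (a + c) := by
  have h := Complex.Gamma_mul_Gamma_eq_betaIntegral (s := (a:ℂ)) (t := (c:ℂ))
    (by simpa using ha) (by simpa using hc)
  have hbeta : Complex.betaIntegral a c =
      ((∫ x in (0:ℝ)..1, x ^ (a - 1) * (1 - x) ^ (c - 1) : ℝ) : ℂ) := by
    rw [Complex.betaIntegral, ← intervalIntegral.integral_ofReal]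
    refine intervalIntegral.integral_congr fun x hmem => ?_
    rw [Set.uIcc_of_le (by norm_num)] at hmem
    obtain ⟨hx0, hx1⟩ := hmem
    rw [Complex.ofReal_mul, Complex.ofReal_cpow hx0,
      Complex.ofReal_cpow (by linarith : (0:ℝ) ≤ 1 - x)]
    push_cast
    ring
  rw [hbeta, ← Complex.ofReal_add, Complex.Gamma_ofReal, Complex.Gamma_ofReal,
    Complex.Gamma_ofReal, ← Complex.ofReal_mul, ← Complex.ofReal_mul] at h
  have h2 := Complex.ofReal_injective h
  have hne : Real.Gamma (a + c) ≠ 0 := (Real.Gamma_pos_of_pos (by linarith)).ne'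
  field_simp [h2]
  linear_combination -h2

lemma beta_Ioi {a c : ℝ} (ha : 0 < a) (hc : 0 < c)
    (hbeta : ∫ x in (0:ℝ)..1, x ^ (a - 1) * (1 - x) ^ (c - 1) =
      Real.Gamma a * Real.Gamma c / Real.Gamma (a + c)) :
    ∫ y in Ioi (0:ℝ), y ^ (a - 1) * (1 + y) ^ (-(a + c)) =
      Real.Gamma a * Real.Gamma c / Real.Gamma (a + c) := by
  have himg : (fun u : ℝ => u / (1 - u)) '' Ioo 0 1 = Ioi 0 := by
    ext y
    constructor
    · rintro ⟨u, ⟨hu0, hu1⟩, rfl⟩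
      exact div_pos hu0 (by linarith)
    · intro hy
      have hy' : 0 < y := mem_Ioi.1 hy
      refine ⟨y / (1 + y), ⟨div_pos hy' (by linarith), ?_⟩, ?_⟩
      · rw [div_lt_one (by linarith)]; linarith
      · show y / (1 + y) / (1 - y / (1 + y)) = y
        have h1 : (1:ℝ) + y ≠ 0 := by positivity
        field_simp
        ring
  have hderiv : ∀ u ∈ Ioo (0:ℝ) 1, HasDerivWithinAt (fun u : ℝ => u / (1 - u))
      (((1 - u) ^ 2)⁻¹) (Ioo 0 1) u := by
    intro u hu
    obtain ⟨hu0, hu1⟩ := hu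
    have h1 : (1:ℝ) - u ≠ 0 := by linarith
    have := (hasDerivAt_id u).div ((hasDerivAt_id u).const_sub 1) h1
    refine this.hasDerivWithinAt.congr_deriv ?_
    simp only [id]
    field_simp
    ring
  have hinj : InjOn (fun u : ℝ => u / (1 - u)) (Ioo 0 1) := by
    rintro u ⟨hu0, hu1⟩ v ⟨hv0, hv1⟩ h
    have h1 : (1:ℝ) - u ≠ 0 := by linarith
    have h2 : (1:ℝ) - v ≠ 0 := by linarith
    field_simp at h
    nlinarith [h]
  have key := integral_image_eq_integral_abs_deriv_smul measurableSet_Ioo hderiv hinj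
    (fun y => y ^ (a - 1) * (1 + y) ^ (-(a + c)))
  rw [himg] at key
  have key2 : ∫ u in Ioo (0:ℝ) 1, |((1 - u) ^ 2)⁻¹| •
      ((u / (1 - u)) ^ (a - 1) * (1 + u / (1 - u)) ^ (-(a + c))) =
      ∫ u in Ioo (0:ℝ) 1, u ^ (a - 1) * (1 - u) ^ (c - 1) := by
    refine setIntegral_congr_fun measurableSet_Ioo fun u hu => ?_
    obtain ⟨hu0, hu1⟩ := hu
    have h1 : (0:ℝ) < 1 - u := by linarith
    have h1u : 1 + u / (1 - u) = (1 - u)⁻¹ := by field_simp; ring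
    have h2 : |((1 - u) ^ 2)⁻¹| = (1 - u) ^ ((-2 : ℝ)) := by
      rw [abs_of_pos (by positivity), ← rpow_natCast (1 - u) 2, ← rpow_neg h1.le]
      norm_num
    have h3 : (u / (1 - u)) ^ (a - 1) = u ^ (a - 1) * (1 - u) ^ (-(a - 1)) := by
      rw [div_rpow hu0.le h1.le, rpow_neg h1.le, div_eq_mul_inv]
    have h4 : (1 + u / (1 - u)) ^ (-(a + c)) = (1 - u) ^ (a + c) := by
      rw [h1u, ← rpow_neg_one (1 - u), ← rpow_mul h1.le]
      norm_num
    rw [smul_eq_mul, h2, h3, h4]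
    calc (1 - u) ^ ((-2:ℝ)) * (u ^ (a - 1) * (1 - u) ^ (-(a - 1)) * (1 - u) ^ (a + c))
        = u ^ (a - 1) * ((1 - u) ^ ((-2:ℝ)) * (1 - u) ^ (-(a - 1)) * (1 - u) ^ (a + c)) := by
          ring
      _ = u ^ (a - 1) * (1 - u) ^ (c - 1) := by
          rw [← rpow_add h1, ← rpow_add h1]
          congr 1
          ring
  rw [key, key2, ← integral_Ioc_eq_integral_Ioo,
    ← intervalIntegral.integral_of_le (by norm_num : (0:ℝ) ≤ 1), hbeta]

lemma int_one {α : ℝ} (hα : 2 < α) {k : ℕ} (hk : 1 ≤ k)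
    (hbeta : ∫ y in Ioi (0:ℝ), y ^ (2/α - 1) * (1 + y) ^ (-(2/α + ((k:ℝ) - 2/α))) =
      Real.Gamma (2/α) * Real.Gamma ((k:ℝ) - 2/α) / Real.Gamma (2/α + ((k:ℝ) - 2/α))) :
    ∫ t in Ioi (0:ℝ), t * ((t ^ α + 1) ^ k)⁻¹ =
      (1/α) * (Real.Gamma (2/α) * Real.Gamma ((k:ℝ) - 2/α) / Real.Gamma (k:ℝ)) := by
  have hα0 : (0:ℝ) < α := by linarith
  set c : ℝ := 2/α with hc
  have key := MeasureTheory.integral_comp_rpow_Ioi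
    (fun y : ℝ => y ^ (c - 1) * (1 + y) ^ (-(c + ((k:ℝ) - c)))) (p := α) hα0.ne'
  have key2 : ∫ x in Ioi (0:ℝ), (|α| * x ^ (α - 1)) •
      ((x ^ α) ^ (c - 1) * (1 + x ^ α) ^ (-(c + ((k:ℝ) - c)))) =
      ∫ x in Ioi (0:ℝ), α * (x * ((x ^ α + 1) ^ k)⁻¹) := by
    refine setIntegral_congr_fun measurableSet_Ioi fun x hx => ?_
    have hx0 : (0:ℝ) < x := hx
    have hxα : (0:ℝ) < x ^ α := rpow_pos_of_pos hx0 α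
    have e1 : (x ^ α) ^ (c - 1) = x ^ (α * (c - 1)) := (rpow_mul hx0.le α (c-1)).symm
    have e2 : (1 + x ^ α) ^ (-(c + ((k:ℝ) - c))) = ((x ^ α + 1) ^ k)⁻¹ := by
      have h1 : (0:ℝ) < 1 + x ^ α := by positivity
      rw [show -(c + ((k:ℝ) - c)) = -(k:ℝ) by ring, rpow_neg h1.le, rpow_natCast,
        add_comm 1 (x ^ α)]
    rw [smul_eq_mul, e1, e2, abs_of_pos hα0]
    have e3 : x ^ (α - 1) * x ^ (α * (c - 1)) = x := by
      rw [← rpow_add hx0]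
      have : α - 1 + α * (c - 1) = 1 := by
        rw [hc]
        field_simp
        ring
      rw [this, rpow_one]
    calc α * x ^ (α - 1) * (x ^ (α * (c - 1)) * ((x ^ α + 1) ^ k)⁻¹)
        = α * ((x ^ (α - 1) * x ^ (α * (c - 1))) * ((x ^ α + 1) ^ k)⁻¹) := by ring
      _ = α * (x * ((x ^ α + 1) ^ k)⁻¹) := by rw [e3]
  rw [key2, integral_const_mul, hbeta] at key
  have hG : Real.Gamma (c + ((k:ℝ) - c)) = Real.Gamma (k:ℝ) := by ring_nf
  rw [hG] at key
  field_simp at key ⊢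
  linarith [key]

lemma int_scaled {α s : ℝ} (hα : 2 < α) (hs : 0 < s) (k : ℕ) :
    ∫ t in Ioi (0:ℝ), t * ((t ^ α + s) ^ k)⁻¹ =
      (s ^ (2/α) * (s ^ k)⁻¹) * ∫ t in Ioi (0:ℝ), t * ((t ^ α + 1) ^ k)⁻¹ := by
  have hα0 : (0:ℝ) < α := by linarith
  set b : ℝ := s ^ (α⁻¹) with hb
  have hb0 : 0 < b := rpow_pos_of_pos hs _
  have hbα : b ^ α = s := by
    rw [hb, ← rpow_mul hs.le, inv_mul_cancel₀ hα0.ne', rpow_one]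
  have key := MeasureTheory.integral_comp_mul_left_Ioi
    (fun t : ℝ => t * ((t ^ α + s) ^ k)⁻¹) 0 hb0
  rw [mul_zero] at key
  have key2 : ∫ x in Ioi (0:ℝ), (fun t : ℝ => t * ((t ^ α + s) ^ k)⁻¹) (b * x) =
      ∫ x in Ioi (0:ℝ), (b * (s ^ k)⁻¹) * (x * ((x ^ α + 1) ^ k)⁻¹) := by
    refine setIntegral_congr_fun measurableSet_Ioi fun x hx => ?_
    have hx0 : (0:ℝ) < x := hx
    have e1 : (b * x) ^ α = s * x ^ α := by
      rw [mul_rpow hb0.le hx0.le, hbα]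
    simp only
    rw [e1, show s * x ^ α + s = s * (x ^ α + 1) by ring, mul_pow, mul_inv]
    ring
  rw [key2, integral_const_mul] at key
  beta_reduce at key
  have heq : (∫ t in Ioi (0:ℝ), t * ((t ^ α + s) ^ k)⁻¹) =
      b * (b * (s ^ k)⁻¹ * ∫ x in Ioi (0:ℝ), x * ((x ^ α + 1) ^ k)⁻¹) := by
    rw [key, smul_eq_mul, ← mul_assoc, mul_inv_cancel₀ hb0.ne', one_mul]
  rw [heq]
  have hbb : b * b = s ^ (2/α) := by
    rw [hb, ← rpow_add hs]
    congr 1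
    field_simp
    norm_num
  calc b * (b * (s ^ k)⁻¹ * ∫ x in Ioi (0:ℝ), x * ((x ^ α + 1) ^ k)⁻¹)
      = (b * b) * (s ^ k)⁻¹ * ∫ x in Ioi (0:ℝ), x * ((x ^ α + 1) ^ k)⁻¹ := by ring
    _ = _ := by rw [hbb]

lemma integrable_term {α s : ℝ} (hα : 2 < α) (hs : 0 < s) {k : ℕ} (hk : 1 ≤ k) :
    IntegrableOn (fun t : ℝ => t * ((t ^ α + s) ^ k)⁻¹) (Ioi 0) := by
  have hα0 : (0:ℝ) < α := by linarith
  have hcont : ContinuousOn (fun t : ℝ => t * ((t ^ α + s) ^ k)⁻¹) (Icc 0 1) := by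
    have hc1 : Continuous fun t : ℝ => t ^ α := by
      rw [continuous_iff_continuousAt]
      intro x
      exact Real.continuousAt_rpow_const x α (Or.inr hα0.le)
    refine ContinuousOn.mul continuousOn_id (ContinuousOn.inv₀ ?_ ?_)
    · exact ((hc1.add continuous_const).pow k).continuousOn
    · intro x hx
      have : (0:ℝ) < x ^ α + s := by
        have := rpow_nonneg hx.1 α
        linarith
      positivity
  have h1 : IntegrableOn (fun t : ℝ => t * ((t ^ α + s) ^ k)⁻¹) (Ioc 0 1) :=
    (hcont.integrableOn_Icc).mono_set Ioc_subset_Icc_self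
  have h2 : IntegrableOn (fun t : ℝ => t * ((t ^ α + s) ^ k)⁻¹) (Ioi 1) := by
    refine Integrable.mono' (g := fun t : ℝ => t ^ (1 - α))
      (integrableOn_Ioi_rpow_of_lt (by linarith) one_pos) ?_ ?_
    · refine ContinuousOn.aestronglyMeasurable ?_ measurableSet_Ioi
      have hc1 : Continuous fun t : ℝ => t ^ α := by
        rw [continuous_iff_continuousAt]
        intro x
        exact Real.continuousAt_rpow_const x α (Or.inr hα0.le)
      refine ContinuousOn.mul continuousOn_id (ContinuousOn.inv₀ ?_ ?_)
      · exact ((hc1.add continuous_const).pow k).continuousOn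
      · intro x hx
        have hx1 : (1:ℝ) < x := hx
        have : (0:ℝ) < x ^ α := rpow_pos_of_pos (by linarith) α
        positivity
    · filter_upwards [ae_restrict_mem measurableSet_Ioi] with t ht
      have ht1 : (1:ℝ) < t := ht
      have ht0 : (0:ℝ) < t := by linarith
      have htα : (1:ℝ) ≤ t ^ α := one_le_rpow ht1.le hα0.le
      have hd1 : (1:ℝ) ≤ t ^ α + s := by linarith
      have hpow : t ^ α ≤ (t ^ α + s) ^ k := by
        calc t ^ α ≤ t ^ α + s := by linarith
          _ = (t ^ α + s) ^ 1 := (pow_one _).symm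
          _ ≤ (t ^ α + s) ^ k := pow_le_pow_right₀ hd1 hk
      rw [norm_mul, norm_inv, Real.norm_of_nonneg ht0.le,
        Real.norm_of_nonneg (by positivity : (0:ℝ) ≤ (t ^ α + s) ^ k)]
      have hinv : ((t ^ α + s) ^ k)⁻¹ ≤ (t ^ α)⁻¹ :=
        inv_anti₀ (by positivity) hpow
      calc t * ((t ^ α + s) ^ k)⁻¹ ≤ t * (t ^ α)⁻¹ := by
            exact mul_le_mul_of_nonneg_left hinv ht0.le
        _ = t ^ (1 - α) := by
            rw [← rpow_neg ht0.le]
            nth_rewrite 1 [← rpow_one t]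
            rw [← rpow_add ht0, show (1:ℝ) + -α = 1 - α from by ring]
  have := h1.union h2
  rwa [Ioc_union_Ioi_eq_Ioi (by norm_num : (0:ℝ) ≤ 1)] at this

lemma gamma_prod {c : ℝ} (hc0 : 0 < c) (hc1 : c < 1) :
    ∀ k : ℕ, 1 ≤ k → (-1:ℝ)^(k+1) * (Real.Gamma ((k:ℝ) - c) / Real.Gamma (k:ℝ)) =
      Real.Gamma (1 - c) * ∏ j ∈ Finset.Icc 1 (k-1), ((c - (j:ℝ)) / (j:ℝ)) := by
  intro k hk
  induction k, hk using Nat.le_induction with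
  | base => simp [Real.Gamma_one]
  | succ k hk ih =>
    have hk1 : (1:ℝ) ≤ (k:ℝ) := by exact_mod_cast hk
    have hkc : ((k:ℝ) - c) ≠ 0 := by nlinarith
    have hk0 : ((k:ℝ)) ≠ 0 := by positivity
    have hGk : Real.Gamma (k:ℝ) ≠ 0 := (Real.Gamma_pos_of_pos (by linarith)).ne'
    have hG1 : Real.Gamma (((k+1:ℕ)):ℝ) = (k:ℝ) * Real.Gamma (k:ℝ) := by
      push_cast
      rw [Real.Gamma_add_one hk0]
    have hG2 : Real.Gamma (((k+1:ℕ):ℝ) - c) = ((k:ℝ) - c) * Real.Gamma ((k:ℝ) - c) := by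
      push_cast
      rw [show (k:ℝ) + 1 - c = ((k:ℝ) - c) + 1 by ring, Real.Gamma_add_one hkc]
    have hprod : ∏ j ∈ Finset.Icc 1 ((k+1)-1), ((c - (j:ℝ)) / (j:ℝ)) =
        (∏ j ∈ Finset.Icc 1 (k-1), ((c - (j:ℝ)) / (j:ℝ))) * ((c - (k:ℝ)) / (k:ℝ)) := by
      obtain ⟨m, rfl⟩ : ∃ m, k = m + 1 := ⟨k - 1, (Nat.succ_pred_eq_of_pos hk).symm⟩
      rw [Nat.add_sub_cancel, Nat.add_sub_cancel,
        Finset.prod_Icc_succ_top (by omega : 1 ≤ m + 1)]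
    rw [hG1, hG2, hprod, ← mul_assoc, ← ih, pow_succ]
    field_simp
    ring

lemma binom_expand (b : ℕ) (x : ℝ) :
    1 - (1 - x) ^ b = ∑ k ∈ Finset.Icc 1 b, (b.choose k : ℝ) * (-1)^(k+1) * x^k := by
  have h : (1 - x) ^ b = ∑ k ∈ Finset.range (b+1), (-x)^k * 1^(b-k) * (b.choose k : ℝ) := by
    rw [show (1:ℝ) - x = -x + 1 by ring, add_pow]
  rw [h, Finset.range_eq_Ico, Finset.sum_eq_sum_Ico_succ_bot (by omega : 0 < b + 1),
    Finset.Ico_add_one_right_eq_Icc]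
  simp only [pow_zero, one_pow, Nat.choose_zero_right, Nat.cast_one, one_mul, mul_one]
  rw [sub_add_eq_sub_sub, sub_self, zero_sub, ← Finset.sum_neg_distrib]
  refine Finset.sum_congr rfl fun k hk => ?_
  rw [pow_succ]
  ring

theorem stmt2 (α s p : ℝ) (b : ℕ) (hα : 2 < α) (hs : 0 < s)
    (hp0 : 0 ≤ p) (hp1 : p ≤ 1) (hb : 1 ≤ b) :
    ∫ z : EuclideanSpace ℝ (Fin 2), (1 - (1 - p * s / (‖z‖ ^ α + s)) ^ b) =
      π * s ^ (2 / α) * Real.Gamma (1 + 2 / α) * Real.Gamma (1 - 2 / α) *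
        Dcal b p (2 / α) := by
  have hα0 : (0:ℝ) < α := by linarith
  have hc0 : (0:ℝ) < 2/α := by positivity
  have hc1 : 2/α < 1 := by rw [div_lt_one hα0]; linarith
  -- Step 1: 2D → 1D
  have h2d := MeasureTheory.integral_fun_norm_addHaar
    (volume : Measure (EuclideanSpace ℝ (Fin 2)))
    (fun r : ℝ => 1 - (1 - p * s / (r ^ α + s)) ^ b)
  have hdim : Module.finrank ℝ (EuclideanSpace ℝ (Fin 2)) = 2 := finrank_euclideanSpace_fin
  rw [hdim] at h2d
  have hball : (volume (Metric.ball (0:EuclideanSpace ℝ (Fin 2)) 1)).toReal = π := by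
    rw [EuclideanSpace.volume_ball]
    have h2 : Real.Gamma ((Fintype.card (Fin 2) : ℝ) / 2 + 1) = 1 := by
      norm_num [Real.Gamma_two]
    rw [h2]
    norm_num [ENNReal.toReal_ofReal pi_pos.le, sq_sqrt pi_pos.le,
      Real.sq_sqrt pi_pos.le]
  rw [measureReal_def, hball] at h2d
  simp only [show (2:ℕ)-1 = 1 from rfl, pow_one, smul_eq_mul, nsmul_eq_mul,
    Nat.cast_ofNat] at h2d
  have hpt : EqOn (fun y : ℝ => y * (1 - (1 - p * s / (y ^ α + s)) ^ b))
      (fun y : ℝ => ∑ k ∈ Finset.Icc 1 b,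
        ((b.choose k : ℝ) * (-1)^(k+1) * p^k * s^k) * (y * ((y ^ α + s) ^ k)⁻¹))
      (Ioi 0) := by
    intro y _
    simp only
    rw [binom_expand b (p * s / (y ^ α + s)), Finset.mul_sum]
    refine Finset.sum_congr rfl fun k _ => ?_
    rw [div_pow, div_eq_mul_inv, mul_pow]
    ring
  rw [setIntegral_congr_fun measurableSet_Ioi hpt] at h2d
  rw [integral_finset_sum _ (fun k hk => ((integrable_term hα hs
    (Finset.mem_Icc.1 hk).1).const_mul _))] at h2d
  have hJ : ∀ k ∈ Finset.Icc 1 b,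
      ∫ y in Ioi (0:ℝ), ((b.choose k : ℝ) * (-1)^(k+1) * p^k * s^k) *
        (y * ((y ^ α + s) ^ k)⁻¹) =
      ((b.choose k : ℝ) * (-1)^(k+1) * p^k * s^k) * ((s ^ (2/α) * (s ^ k)⁻¹) *
        ((1/α) * (Real.Gamma (2/α) * Real.Gamma ((k:ℝ) - 2/α) / Real.Gamma (k:ℝ)))) := by
    intro k hk
    have hk1 : 1 ≤ k := (Finset.mem_Icc.1 hk).1
    have hkc : (0:ℝ) < (k:ℝ) - 2/α := by
      have : (1:ℝ) ≤ (k:ℝ) := by exact_mod_cast hk1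
      linarith
    rw [integral_const_mul, int_scaled hα hs k,
      int_one hα hk1 (beta_Ioi hc0 hkc (real_beta hc0 hkc))]
  rw [Finset.sum_congr rfl hJ] at h2d
  rw [h2d, Dcal]
  simp only [Finset.mul_sum]
  refine Finset.sum_congr rfl fun k hk => ?_
  have hk1 : 1 ≤ k := (Finset.mem_Icc.1 hk).1
  have hk1' : (1:ℝ) ≤ (k:ℝ) := by exact_mod_cast hk1
  have hGP := gamma_prod hc0 hc1 k hk1
  have hG1c : Real.Gamma (1 + 2/α) = (2/α) * Real.Gamma (2/α) := by
    rw [add_comm, Real.Gamma_add_one hc0.ne']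
  have hGk : Real.Gamma (k:ℝ) ≠ 0 := (Real.Gamma_pos_of_pos (by linarith)).ne'
  have hsk : (s:ℝ)^k ≠ 0 := pow_ne_zero k hs.ne'
  calc 2 * (π * (((b.choose k : ℝ) * (-1)^(k+1) * p^k * s^k) * ((s ^ (2/α) * (s ^ k)⁻¹) *
        ((1/α) * (Real.Gamma (2/α) * Real.Gamma ((k:ℝ) - 2/α) / Real.Gamma (k:ℝ))))))
      = π * s^(2/α) * ((2/α) * Real.Gamma (2/α)) * ((b.choose k : ℝ) * p^k *
        ((-1:ℝ)^(k+1) * (Real.Gamma ((k:ℝ) - 2/α) / Real.Gamma (k:ℝ)))) * (s^k * (s^k)⁻¹) := by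
        ring
    _ = π * s ^ (2 / α) * Real.Gamma (1 + 2 / α) * Real.Gamma (1 - 2 / α) *
        ((b.choose k : ℝ) * p ^ k * ∏ j ∈ Finset.Icc 1 (k - 1), (2/α - (j : ℝ)) / (j : ℝ)) := by
        rw [mul_inv_cancel₀ hsk, mul_one, hGP, ← hG1c]
        ring
end
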